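/- arXiv:2403.16177 — 5 statements merged into one kernel-verified Lean document; each statement's English description precedes it below -/
import Mathlib

section
/- Under experimental internal validity, short-term external validity, latent unconfounding, consistency and strict overlap, for each w ∈ {0,1} the mean long-term potential outcome in the observational group is identified by E[Y2(w) | G=1] = Σ_{x∈𝒳, P(X=x|G=1)>0} P(X=x | G=1) · Σ_{y∈𝒴} P(Y1=y | W=w, X=x, G=0) · E[Y2 | Y1=y, W=w, X=x, G=1]; consequently the long-term average treatment effect E[Y2(1) − Y2(0) | G=1] equals the difference of these two identified expressions. -/
/-!
Condition on `G = 1`, split the mean of `Y2(w)` over the fibres of `X`, and then over those of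
`Y1(w)`. Everything rests on one fact: conditioning on an event `{f ∈ s}` of positive
probability does not change the law of a variable independent of `f`. Applied with external
validity, then internal validity, it moves the weight `P(Y1(w) = y | X = x, G = 1)` into the
experiment and onto `{W = w}`, where `Y1(w)` is the observed `Y1`; applied with latent
unconfounding it adds `{W = w}` to the conditioning event of the mean of `Y2(w)` in the
observational group, where `Y2(w)` is the observed `Y2`.
-/

open MeasureTheory ProbabilityTheory

/-- Conditional probability `P(A | B)` as a real number. -/
noncomputable def cP {Ω : Type*} [MeasurableSpace Ω] (P : Measure Ω) (A B : Set Ω) : ℝ :=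
  ((P[|B]) A).toReal

/-- Conditional expectation `E[Y | B]` (expectation under the conditional measure). -/
noncomputable def cE {Ω : Type*} [MeasurableSpace Ω] (P : Measure Ω) (Y : Ω → ℝ) (B : Set Ω) :
    ℝ :=
  ∫ ω, Y ω ∂(P[|B])

section General

variable {Ω α β : Type*} [MeasurableSpace Ω]

theorem MeasureTheory.Integrable.cond {E : Type*} [NormedAddCommGroup E] {μ : Measure Ω}
    {Y : Ω → E} (hY : Integrable Y μ) (s : Set Ω) : Integrable Y (μ[|s]) := by
  rcases eq_or_ne (μ s) 0 with hs | hs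
  · rw [cond_eq_zero_of_meas_eq_zero hs]
    exact integrable_zero_measure
  · exact hY.restrict.smul_measure (ENNReal.inv_ne_top.2 hs)

variable {P : Measure Ω}

theorem cP_congr {B : Set Ω} (hB : MeasurableSet B) {g g' : Ω → β} (h : Set.EqOn g g' B)
    (t : Set β) : cP P (g ⁻¹' t) B = cP P (g' ⁻¹' t) B := by
  refine congrArg ENNReal.toReal (measure_congr ?_)
  filter_upwards [ae_cond_mem hB] with ω hω
  change (g ω ∈ t) = (g' ω ∈ t)
  rw [h hω]

theorem cE_congr {B : Set Ω} (hB : MeasurableSet B) {Y Y' : Ω → ℝ} (h : Set.EqOn Y Y' B) :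
    cE P Y B = cE P Y' B :=
  integral_congr_ae (ae_cond_of_forall_mem hB fun _ hω => h hω)

theorem cE_sub {Y Y' : Ω → ℝ} (hY : Integrable Y P) (hY' : Integrable Y' P) (B : Set Ω) :
    cE P (fun ω => Y ω - Y' ω) B = cE P Y B - cE P Y' B :=
  integral_sub (hY.cond B) (hY'.cond B)

variable [MeasurableSpace α] [MeasurableSpace β]

theorem ProbabilityTheory.IndepFun.map_cond_preimage {μ : Measure Ω} [IsFiniteMeasure μ]
    {f : Ω → α} {g : Ω → β} (hfg : IndepFun f g μ) (hf : Measurable f) (hg : Measurable g)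
    {s : Set α} (hs : MeasurableSet s) (hμs : μ (f ⁻¹' s) ≠ 0) :
    (μ[|f ⁻¹' s]).map g = μ.map g := by
  ext t ht
  rw [Measure.map_apply hg ht, Measure.map_apply hg ht, cond_apply (hf hs),
    hfg.measure_inter_preimage_eq_mul s t hs ht, ← mul_assoc,
    ENNReal.inv_mul_cancel hμs (measure_ne_top μ _), one_mul]

theorem map_cond_inter_preimage_of_indepFun [IsFiniteMeasure P] {C : Set Ω}
    (hC : MeasurableSet C) {f : Ω → α} {g : Ω → β} (hf : Measurable f) (hg : Measurable g)
    (hfg : IndepFun f g (P[|C])) {s : Set α} (hs : MeasurableSet s)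
    (hCs : P (C ∩ f ⁻¹' s) ≠ 0) :
    (P[|C ∩ f ⁻¹' s]).map g = (P[|C]).map g := by
  rw [← cond_cond_eq_cond_inter hC (hf hs)]
  exact hfg.map_cond_preimage hf hg hs (cond_pos_of_inter_ne_zero hC hCs).ne'

theorem cP_inter_preimage_of_indepFun [IsFiniteMeasure P] {C : Set Ω}
    (hC : MeasurableSet C) {f : Ω → α} {g : Ω → β} (hf : Measurable f) (hg : Measurable g)
    (hfg : IndepFun f g (P[|C])) {s : Set α} (hs : MeasurableSet s)
    (hCs : P (C ∩ f ⁻¹' s) ≠ 0) {t : Set β} (ht : MeasurableSet t) :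
    cP P (g ⁻¹' t) (C ∩ f ⁻¹' s) = cP P (g ⁻¹' t) C := by
  simp only [cP, ← Measure.map_apply hg ht,
    map_cond_inter_preimage_of_indepFun hC hf hg hfg hs hCs]

theorem cE_inter_preimage_of_indepFun [IsFiniteMeasure P] {C : Set Ω}
    (hC : MeasurableSet C) {f : Ω → α} {Y : Ω → ℝ} (hf : Measurable f) (hY : Measurable Y)
    (hfY : IndepFun f Y (P[|C])) {s : Set α} (hs : MeasurableSet s)
    (hCs : P (C ∩ f ⁻¹' s) ≠ 0) :
    cE P Y (C ∩ f ⁻¹' s) = cE P Y C := by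
  have hmap := map_cond_inter_preimage_of_indepFun hC hf hY hfY hs hCs
  calc ∫ ω, Y ω ∂(P[|C ∩ f ⁻¹' s]) = ∫ y, y ∂((P[|C ∩ f ⁻¹' s]).map Y) :=
        (integral_map hY.aemeasurable aestronglyMeasurable_id).symm
    _ = ∫ ω, Y ω ∂(P[|C]) := by
        rw [hmap]
        exact integral_map hY.aemeasurable aestronglyMeasurable_id

theorem cE_eq_sum_cP_mul_cE [IsFiniteMeasure P] [Fintype α] [MeasurableSingletonClass α]
    {f : Ω → α} (hf : Measurable f) {Y : Ω → ℝ} (hY : Integrable Y P) {B : Set Ω}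
    (hB : MeasurableSet B) :
    cE P Y B = ∑ a, cP P {ω | f ω = a} B * cE P Y ({ω | f ω = a} ∩ B) := by
  have htotal := sum_meas_smul_cond_fiber hf (P[|B])
  have hint : ∀ a ∈ Finset.univ, Integrable Y ((P[|B]) (f ⁻¹' {a}) • P[|B][|f ⁻¹' {a}]) :=
    integrable_finsetSum_measure.1 (by rw [htotal]; exact hY.cond B)
  rw [cE, ← htotal, integral_finsetSum_measure hint]
  refine Finset.sum_congr rfl fun a _ => ?_
  rw [integral_smul_measure, cond_cond_eq_cond_inter hB (hf (measurableSet_singleton a)),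
    Set.inter_comm, smul_eq_mul, cP, cE]
  rfl

theorem ProbabilityTheory.IndepFun.of_prod_bool {μ : Measure Ω} {f : Ω → α}
    {Z : Bool → Ω → β} (h : IndepFun f (fun ω => (Z true ω, Z false ω)) μ) (w : Bool) :
    IndepFun f (Z w) μ := by
  cases w
  · exact h.comp measurable_id measurable_snd
  · exact h.comp measurable_id measurable_fst

end General

noncomputable def identifiedLongTermMean {Ω 𝒳 𝒴 : Type*} [MeasurableSpace Ω] [Fintype 𝒳]
    [Fintype 𝒴] (P : Measure Ω) (W G : Ω → Bool) (X : Ω → 𝒳) (Y1 : Bool → Ω → 𝒴)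
    (Y2 : Bool → Ω → ℝ) (w : Bool) : ℝ :=
  ∑ x : 𝒳, cP P {ω | X ω = x} {ω | G ω = true} *
    ∑ y : 𝒴,
      cP P {ω | Y1 (W ω) ω = y} ({ω | W ω = w} ∩ {ω | X ω = x} ∩ {ω | G ω = false}) *
      cE P (fun ω => Y2 (W ω) ω)
        ({ω | Y1 (W ω) ω = y} ∩ {ω | W ω = w} ∩ {ω | X ω = x} ∩ {ω | G ω = true})

section LongTerm

variable {Ω 𝒳 𝒴 : Type*} [MeasurableSpace Ω] [MeasurableSpace 𝒳] [MeasurableSingletonClass 𝒳]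
  [MeasurableSpace 𝒴] [MeasurableSingletonClass 𝒴] {P : Measure Ω} [IsFiniteMeasure P]
  {W G : Ω → Bool} {X : Ω → 𝒳}

theorem cP_potential_eq_cP_experimental {Y1 : Bool → Ω → 𝒴} (hW : Measurable W)
    (hG : Measurable G) (hX : Measurable X) (hY1 : ∀ w, Measurable (Y1 w)) (w : Bool) (x : 𝒳)
    (y : 𝒴)
    (hIV : IndepFun W (fun ω => (Y1 true ω, Y1 false ω))
      (P[|{ω | X ω = x} ∩ {ω | G ω = false}]))
    (hEV : IndepFun G (fun ω => (Y1 true ω, Y1 false ω)) (P[|{ω | X ω = x}]))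
    (hOv0 : 0 < P ({ω | W ω = w} ∩ {ω | X ω = x} ∩ {ω | G ω = false}))
    (hOvX1 : 0 < P ({ω | X ω = x} ∩ {ω | G ω = true})) :
    cP P {ω | Y1 w ω = y} ({ω | X ω = x} ∩ {ω | G ω = true}) =
      cP P {ω | Y1 (W ω) ω = y} ({ω | W ω = w} ∩ {ω | X ω = x} ∩ {ω | G ω = false}) := by
  have hXm : MeasurableSet {ω | X ω = x} := hX (measurableSet_singleton x)
  have hXG0m : MeasurableSet ({ω | X ω = x} ∩ {ω | G ω = false}) :=
    hXm.inter (hG (measurableSet_singleton false))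
  have hset : {ω | W ω = w} ∩ {ω | X ω = x} ∩ {ω | G ω = false} =
      {ω | X ω = x} ∩ {ω | G ω = false} ∩ {ω | W ω = w} := by
    rw [Set.inter_assoc, Set.inter_comm]
  rw [hset] at hOv0 ⊢
  have hXG0 : P ({ω | X ω = x} ∩ {ω | G ω = false}) ≠ 0 :=
    (hOv0.trans_le (measure_mono Set.inter_subset_left)).ne'
  have hEVw := hEV.of_prod_bool w
  calc cP P {ω | Y1 w ω = y} ({ω | X ω = x} ∩ {ω | G ω = true})
      = cP P {ω | Y1 w ω = y} {ω | X ω = x} :=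
        cP_inter_preimage_of_indepFun hXm hG (hY1 w) hEVw (measurableSet_singleton true)
          hOvX1.ne' (measurableSet_singleton y)
    _ = cP P {ω | Y1 w ω = y} ({ω | X ω = x} ∩ {ω | G ω = false}) :=
        (cP_inter_preimage_of_indepFun hXm hG (hY1 w) hEVw (measurableSet_singleton false)
          hXG0 (measurableSet_singleton y)).symm
    _ = cP P {ω | Y1 w ω = y} ({ω | X ω = x} ∩ {ω | G ω = false} ∩ {ω | W ω = w}) :=
        (cP_inter_preimage_of_indepFun hXG0m hW (hY1 w) (hIV.of_prod_bool w)
          (measurableSet_singleton w) hOv0.ne' (measurableSet_singleton y)).symm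
    _ = cP P {ω | Y1 (W ω) ω = y} ({ω | X ω = x} ∩ {ω | G ω = false} ∩ {ω | W ω = w}) :=
        cP_congr (hXG0m.inter (hW (measurableSet_singleton w)))
          (fun ω hω => (congrArg (Y1 · ω) hω.2).symm) {y}

theorem cE_potential_eq_cE_observed {Y1 : Bool → Ω → 𝒴} {Y2 : Bool → Ω → ℝ}
    (hW : Measurable W) (hG : Measurable G) (hX : Measurable X) (hY1 : ∀ w, Measurable (Y1 w))
    (hY2 : ∀ w, Measurable (Y2 w)) (w : Bool) (x : 𝒳) (y : 𝒴)
    (hLU : IndepFun W (Y2 w) (P[|{ω | Y1 w ω = y} ∩ {ω | X ω = x} ∩ {ω | G ω = true}]))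
    (hOv1 : 0 < P ({ω | Y1 (W ω) ω = y} ∩ {ω | W ω = w} ∩ {ω | X ω = x} ∩
      {ω | G ω = true})) :
    cE P (Y2 w) ({ω | Y1 w ω = y} ∩ ({ω | X ω = x} ∩ {ω | G ω = true})) =
      cE P (fun ω => Y2 (W ω) ω)
        ({ω | Y1 (W ω) ω = y} ∩ {ω | W ω = w} ∩ {ω | X ω = x} ∩ {ω | G ω = true}) := by
  set A := {ω | Y1 w ω = y} ∩ {ω | X ω = x} ∩ {ω | G ω = true}
  have hAm : MeasurableSet A := ((hY1 w (measurableSet_singleton y)).inter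
    (hX (measurableSet_singleton x))).inter (hG (measurableSet_singleton true))
  have hset : {ω | Y1 (W ω) ω = y} ∩ {ω | W ω = w} ∩ {ω | X ω = x} ∩ {ω | G ω = true} =
      A ∩ {ω | W ω = w} := by
    ext ω
    simp only [A, Set.mem_inter_iff, Set.mem_ofPred_eq]
    grind
  rw [hset] at hOv1
  rw [← Set.inter_assoc, hset]
  calc cE P (Y2 w) A = cE P (Y2 w) (A ∩ {ω | W ω = w}) :=
        (cE_inter_preimage_of_indepFun hAm hW (hY2 w) hLU (measurableSet_singleton w)
          hOv1.ne').symm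
    _ = cE P (fun ω => Y2 (W ω) ω) (A ∩ {ω | W ω = w}) :=
        cE_congr (hAm.inter (hW (measurableSet_singleton w)))
          fun ω hω => (congrArg (Y2 · ω) hω.2).symm

end LongTerm

theorem long_term_ATE_identification_general
    {Ω : Type*} [MeasurableSpace Ω] (P : Measure Ω) [IsProbabilityMeasure P]
    {𝒳 𝒴 : Type*} [Fintype 𝒳] [Fintype 𝒴]
    [MeasurableSpace 𝒳] [MeasurableSingletonClass 𝒳]
    [MeasurableSpace 𝒴] [MeasurableSingletonClass 𝒴]
    (W G : Ω → Bool) (X : Ω → 𝒳) (Y1 : Bool → Ω → 𝒴) (Y2 : Bool → Ω → ℝ)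
    (hW : Measurable W) (hG : Measurable G) (hX : Measurable X)
    (hY1 : ∀ w, Measurable (Y1 w)) (hY2 : ∀ w, Measurable (Y2 w))
    (hY2int : ∀ w, Integrable (Y2 w) P)
    -- experimental internal validity
    (hIV : ∀ x : 𝒳, 0 < P ({ω | X ω = x} ∩ {ω | G ω = false}) →
      IndepFun W (fun ω => (Y2 true ω, Y2 false ω, Y1 true ω, Y1 false ω))
        (P[|{ω | X ω = x} ∩ {ω | G ω = false}]))
    -- short-term external validity
    (hEV : ∀ x : 𝒳, 0 < P {ω | X ω = x} →
      IndepFun G (fun ω => (Y1 true ω, Y1 false ω)) (P[|{ω | X ω = x}]))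
    -- latent unconfounding
    (hLU : ∀ (w : Bool) (y : 𝒴) (x : 𝒳),
      0 < P ({ω | Y1 w ω = y} ∩ {ω | X ω = x} ∩ {ω | G ω = true}) →
      IndepFun W (Y2 w) (P[|{ω | Y1 w ω = y} ∩ {ω | X ω = x} ∩ {ω | G ω = true}]))
    -- strict overlap: every conditioning event has positive probability
    (hOv0 : ∀ (w : Bool) (x : 𝒳),
      0 < P ({ω | W ω = w} ∩ {ω | X ω = x} ∩ {ω | G ω = false}))
    (hOvX1 : ∀ x : 𝒳, 0 < P ({ω | X ω = x} ∩ {ω | G ω = true}))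
    (hOv1 : ∀ (w : Bool) (y : 𝒴) (x : 𝒳),
      0 < P ({ω | Y1 (W ω) ω = y} ∩ {ω | W ω = w} ∩ {ω | X ω = x} ∩ {ω | G ω = true}))
    (hLUpos : ∀ (w : Bool) (y : 𝒴) (x : 𝒳),
      0 < P ({ω | Y1 w ω = y} ∩ {ω | X ω = x} ∩ {ω | G ω = true})) :
    (∀ w : Bool,
      cE P (Y2 w) {ω | G ω = true} =
        ∑ x : 𝒳, cP P {ω | X ω = x} {ω | G ω = true} *
          ∑ y : 𝒴,
            cP P {ω | Y1 (W ω) ω = y}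
              ({ω | W ω = w} ∩ {ω | X ω = x} ∩ {ω | G ω = false}) *
            cE P (fun ω => Y2 (W ω) ω)
              ({ω | Y1 (W ω) ω = y} ∩ {ω | W ω = w} ∩ {ω | X ω = x} ∩ {ω | G ω = true}))
    ∧
    cE P (fun ω => Y2 true ω - Y2 false ω) {ω | G ω = true} =
      (∑ x : 𝒳, cP P {ω | X ω = x} {ω | G ω = true} *
        ∑ y : 𝒴,
          cP P {ω | Y1 (W ω) ω = y}
            ({ω | W ω = true} ∩ {ω | X ω = x} ∩ {ω | G ω = false}) *
          cE P (fun ω => Y2 (W ω) ω)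
            ({ω | Y1 (W ω) ω = y} ∩ {ω | W ω = true} ∩ {ω | X ω = x} ∩ {ω | G ω = true}))
      -
      (∑ x : 𝒳, cP P {ω | X ω = x} {ω | G ω = true} *
        ∑ y : 𝒴,
          cP P {ω | Y1 (W ω) ω = y}
            ({ω | W ω = false} ∩ {ω | X ω = x} ∩ {ω | G ω = false}) *
          cE P (fun ω => Y2 (W ω) ω)
            ({ω | Y1 (W ω) ω = y} ∩ {ω | W ω = false} ∩ {ω | X ω = x} ∩ {ω | G ω = true})) := by
  have key : ∀ w, cE P (Y2 w) {ω | G ω = true} = identifiedLongTermMean P W G X Y1 Y2 w := by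
    intro w
    have hG1m : MeasurableSet {ω | G ω = true} := hG (measurableSet_singleton true)
    have hXG1m : ∀ x, MeasurableSet ({ω | X ω = x} ∩ {ω | G ω = true}) :=
      fun x => (hX (measurableSet_singleton x)).inter hG1m
    rw [identifiedLongTermMean, cE_eq_sum_cP_mul_cE hX (hY2int w) hG1m]
    refine Finset.sum_congr rfl fun x _ => congrArg _ ?_
    rw [cE_eq_sum_cP_mul_cE (hY1 w) (hY2int w) (hXG1m x)]
    refine Finset.sum_congr rfl fun y _ => ?_
    have hXG0 : 0 < P ({ω | X ω = x} ∩ {ω | G ω = false}) :=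
      (hOv0 w x).trans_le (measure_mono (Set.inter_subset_inter_left _ Set.inter_subset_right))
    have hX0 : 0 < P {ω | X ω = x} := (hOvX1 x).trans_le (measure_mono Set.inter_subset_left)
    rw [cP_potential_eq_cP_experimental hW hG hX hY1 w x y
        ((hIV x hXG0).comp measurable_id (measurable_snd.comp measurable_snd)) (hEV x hX0)
        (hOv0 w x) (hOvX1 x),
      cE_potential_eq_cE_observed hW hG hX hY1 hY2 w x y (hLU w y x (hLUpos w y x)) (hOv1 w y x)]
  exact ⟨key, by rw [cE_sub (hY2int true) (hY2int false), key, key]; rfl⟩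

/-- Under experimental internal validity, short-term external validity,
latent unconfounding, consistency (observed outcomes are `Y1 (W ω) ω`, `Y2 (W ω) ω`) and
strict overlap, for each `w` the mean long-term potential outcome in the observational group
(`G = true`) is identified by the data-combination formula, and consequently the long-term
average treatment effect is identified as the difference of the two identified expressions. -/
theorem long_term_ATE_identification
    {Ω : Type*} [MeasurableSpace Ω] (P : Measure Ω) [IsProbabilityMeasure P]
    {𝒳 𝒴 : Type*} [Fintype 𝒳] [Fintype 𝒴]
    [MeasurableSpace 𝒳] [MeasurableSingletonClass 𝒳]
    [MeasurableSpace 𝒴] [MeasurableSingletonClass 𝒴]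
    (W G : Ω → Bool) (X : Ω → 𝒳) (Y1 : Bool → Ω → 𝒴) (Y2 : Bool → Ω → ℝ)
    (hW : Measurable W) (hG : Measurable G) (hX : Measurable X)
    (hY1 : ∀ w, Measurable (Y1 w)) (hY2 : ∀ w, Measurable (Y2 w))
    (hY2int : ∀ w, Integrable (Y2 w) P)
    -- experimental internal validity
    (hIV : ∀ x : 𝒳, 0 < P ({ω | X ω = x} ∩ {ω | G ω = false}) →
      IndepFun W (fun ω => (Y2 true ω, Y2 false ω, Y1 true ω, Y1 false ω))
        (P[|{ω | X ω = x} ∩ {ω | G ω = false}]))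
    -- short-term external validity
    (hEV : ∀ x : 𝒳, 0 < P {ω | X ω = x} →
      IndepFun G (fun ω => (Y1 true ω, Y1 false ω)) (P[|{ω | X ω = x}]))
    -- latent unconfounding
    (hLU : ∀ (w : Bool) (y : 𝒴) (x : 𝒳),
      0 < P ({ω | Y1 w ω = y} ∩ {ω | X ω = x} ∩ {ω | G ω = true}) →
      IndepFun W (Y2 w) (P[|{ω | Y1 w ω = y} ∩ {ω | X ω = x} ∩ {ω | G ω = true}]))
    -- strict overlap: every conditioning event has positive probability
    (hG1 : 0 < P {ω | G ω = true})
    (hOv0 : ∀ (w : Bool) (x : 𝒳),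
      0 < P ({ω | W ω = w} ∩ {ω | X ω = x} ∩ {ω | G ω = false}))
    (hOvX1 : ∀ x : 𝒳, 0 < P ({ω | X ω = x} ∩ {ω | G ω = true}))
    (hOv1 : ∀ (w : Bool) (y : 𝒴) (x : 𝒳),
      0 < P ({ω | Y1 (W ω) ω = y} ∩ {ω | W ω = w} ∩ {ω | X ω = x} ∩ {ω | G ω = true}))
    (hLUpos : ∀ (w : Bool) (y : 𝒴) (x : 𝒳),
      0 < P ({ω | Y1 w ω = y} ∩ {ω | X ω = x} ∩ {ω | G ω = true})) :
    (∀ w : Bool,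
      cE P (Y2 w) {ω | G ω = true} =
        ∑ x : 𝒳, cP P {ω | X ω = x} {ω | G ω = true} *
          ∑ y : 𝒴,
            cP P {ω | Y1 (W ω) ω = y}
              ({ω | W ω = w} ∩ {ω | X ω = x} ∩ {ω | G ω = false}) *
            cE P (fun ω => Y2 (W ω) ω)
              ({ω | Y1 (W ω) ω = y} ∩ {ω | W ω = w} ∩ {ω | X ω = x} ∩ {ω | G ω = true}))
    ∧
    cE P (fun ω => Y2 true ω - Y2 false ω) {ω | G ω = true} =
      (∑ x : 𝒳, cP P {ω | X ω = x} {ω | G ω = true} *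
        ∑ y : 𝒴,
          cP P {ω | Y1 (W ω) ω = y}
            ({ω | W ω = true} ∩ {ω | X ω = x} ∩ {ω | G ω = false}) *
          cE P (fun ω => Y2 (W ω) ω)
            ({ω | Y1 (W ω) ω = y} ∩ {ω | W ω = true} ∩ {ω | X ω = x} ∩ {ω | G ω = true}))
      -
      (∑ x : 𝒳, cP P {ω | X ω = x} {ω | G ω = true} *
        ∑ y : 𝒴,
          cP P {ω | Y1 (W ω) ω = y}
            ({ω | W ω = false} ∩ {ω | X ω = x} ∩ {ω | G ω = false}) *
          cE P (fun ω => Y2 (W ω) ω)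
            ({ω | Y1 (W ω) ω = y} ∩ {ω | W ω = false} ∩ {ω | X ω = x} ∩ {ω | G ω = true})) :=
  long_term_ATE_identification_general P W G X Y1 Y2 hW hG hX hY1 hY2 hY2int hIV hEV hLU hOv0 hOvX1
    hOv1 hLUpos
end

section
/- (ATETS reduces to the long-term ATE under no state dependence.) Let Y1(1), Y1(0) be {0,1}-valued and Y2(1), Y2(0) integrable real-valued random variables, and G a {0,1}-valued random variable with P(Y1(1)=0, G=1) > 0. If, under the conditional measure P(· | G=1), the pair (Y2(1), Y2(0)) is independent of the pair (Y1(1), Y1(0)), then the average treatment effect on the treated survivors equals the long-term average treatment effect in the observational population: E[Y2(1) | Y1(1)=0, G=1] − E[Y2(0) | Y1(1)=0, G=1] = E[Y2(1) | G=1] − E[Y2(0) | G=1]. -/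
/-! Conditioning on an event `{Z ∈ s}` of positive probability leaves the law of any `X`
independent of `Z` unchanged, hence also its expectation. Under `P(· | G = 1)` the survivor event
`{Y1(1) = 0}` is determined by `(Y1(1), Y1(0))`, so by no state dependence both `Y2(1)` and `Y2(0)`
are independent of it, and conditioning `P(· | G = 1)` further on it gives `P(· | Y1(1) = 0, G = 1)`.
-/

open MeasureTheory ProbabilityTheory

namespace ProbabilityTheory

variable {Ω α β : Type*} [MeasurableSpace Ω] [MeasurableSpace α] [MeasurableSpace β]
  {μ : Measure Ω} {X : Ω → α} {Z : Ω → β} {s : Set β}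

theorem IndepFun.map_cond_preimage_s8 [IsFiniteMeasure μ] (hXZ : X ⟂ᵢ[μ] Z) (hX : Measurable X)
    (hZ : Measurable Z) (hs : MeasurableSet s) (hμs : μ (Z ⁻¹' s) ≠ 0) :
    (μ[|Z ⁻¹' s]).map X = μ.map X := by
  ext t ht
  rw [Measure.map_apply hX ht, Measure.map_apply hX ht, cond_apply (hZ hs), Set.inter_comm,
    hXZ.measure_inter_preimage_eq_mul _ _ ht hs, mul_comm,
    ENNReal.mul_inv_cancel_right hμs (measure_ne_top μ _)]

theorem IndepFun.integral_cond_preimage {E : Type*} [NormedAddCommGroup E] [NormedSpace ℝ E]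
    [MeasurableSpace E] [BorelSpace E] [SecondCountableTopology E] [IsFiniteMeasure μ]
    {X : Ω → E} (hXZ : X ⟂ᵢ[μ] Z) (hX : Measurable X) (hZ : Measurable Z)
    (hs : MeasurableSet s) (hμs : μ (Z ⁻¹' s) ≠ 0) :
    ∫ ω, X ω ∂(μ[|Z ⁻¹' s]) = ∫ ω, X ω ∂μ := by
  calc ∫ ω, X ω ∂(μ[|Z ⁻¹' s]) = ∫ x, x ∂(μ[|Z ⁻¹' s]).map X :=
        (integral_map hX.aemeasurable aestronglyMeasurable_id).symm
    _ = ∫ x, x ∂μ.map X := by rw [hXZ.map_cond_preimage_s8 hX hZ hs hμs]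
    _ = ∫ ω, X ω ∂μ := integral_map hX.aemeasurable aestronglyMeasurable_id

end ProbabilityTheory

theorem cE_inter_eq_of_indepFun {Ω β : Type*} [MeasurableSpace Ω] [MeasurableSpace β]
    {P : Measure Ω} [IsFiniteMeasure P] {X : Ω → ℝ} {Z : Ω → β} {s : Set β} {B : Set Ω}
    (hXZ : X ⟂ᵢ[P[|B]] Z) (hX : Measurable X) (hZ : Measurable Z) (hs : MeasurableSet s)
    (hB : MeasurableSet B) (hpos : P (Z ⁻¹' s ∩ B) ≠ 0) :
    cE P X (Z ⁻¹' s ∩ B) = cE P X B := by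
  have hμs : P[|B] (Z ⁻¹' s) ≠ 0 := by
    rw [cond_apply hB, Set.inter_comm]
    exact mul_ne_zero (ENNReal.inv_ne_zero.2 (measure_ne_top P B)) hpos
  rw [cE, cE, Set.inter_comm, ← cond_cond_eq_cond_inter hB (hZ hs)]
  exact hXZ.integral_cond_preimage hX hZ hs hμs

theorem ATETS_eq_LTATE_of_no_state_dependence_general
    {Ω : Type*} [MeasurableSpace Ω] (P : Measure Ω) [IsProbabilityMeasure P]
    (G : Ω → Bool) (Y1 : Bool → Ω → Bool) (Y2 : Bool → Ω → ℝ)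
    (hG : Measurable G) (hY1 : ∀ w, Measurable (Y1 w)) (hY2 : ∀ w, Measurable (Y2 w))
    (hpos : 0 < P ({ω | Y1 true ω = false} ∩ {ω | G ω = true}))
    (hNSD : IndepFun (fun ω => (Y2 true ω, Y2 false ω))
      (fun ω => (Y1 true ω, Y1 false ω)) (P[|{ω | G ω = true}])) :
    cE P (Y2 true) ({ω | Y1 true ω = false} ∩ {ω | G ω = true}) -
      cE P (Y2 false) ({ω | Y1 true ω = false} ∩ {ω | G ω = true}) =
    cE P (Y2 true) {ω | G ω = true} - cE P (Y2 false) {ω | G ω = true} := by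
  set Z : Ω → Bool × Bool := fun ω => (Y1 true ω, Y1 false ω)
  set B : Set Ω := {ω | G ω = true}
  have hZ : Measurable Z := (hY1 true).prodMk (hY1 false)
  have hB : MeasurableSet B := hG (measurableSet_singleton true)
  have hs : MeasurableSet {p : Bool × Bool | p.1 = false} :=
    measurable_fst (measurableSet_singleton false)
  have hA : {ω | Y1 true ω = false} = Z ⁻¹' {p | p.1 = false} := rfl
  rw [hA] at hpos ⊢
  have hY2Z : ∀ w, Y2 w ⟂ᵢ[P[|B]] Z := by
    rintro (_ | _)
    exacts [hNSD.comp measurable_snd measurable_id, hNSD.comp measurable_fst measurable_id]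
  rw [cE_inter_eq_of_indepFun (hY2Z true) (hY2 true) hZ hs hB hpos.ne',
    cE_inter_eq_of_indepFun (hY2Z false) (hY2 false) hZ hs hB hpos.ne']

/-- Under the (strong) no-state-dependence assumption — independence of
`(Y2(1), Y2(0))` and `(Y1(1), Y1(0))` under `P(·|G=1)` — the average treatment effect on the
treated survivors equals the long-term average treatment effect in the observational
population. -/
theorem ATETS_eq_LTATE_of_no_state_dependence
    {Ω : Type*} [MeasurableSpace Ω] (P : Measure Ω) [IsProbabilityMeasure P]
    (G : Ω → Bool) (Y1 : Bool → Ω → Bool) (Y2 : Bool → Ω → ℝ)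
    (hG : Measurable G) (hY1 : ∀ w, Measurable (Y1 w)) (hY2 : ∀ w, Measurable (Y2 w))
    (hY2int : ∀ w, Integrable (Y2 w) P)
    (hpos : 0 < P ({ω | Y1 true ω = false} ∩ {ω | G ω = true}))
    (hNSD : IndepFun (fun ω => (Y2 true ω, Y2 false ω))
      (fun ω => (Y1 true ω, Y1 false ω)) (P[|{ω | G ω = true}])) :
    cE P (Y2 true) ({ω | Y1 true ω = false} ∩ {ω | G ω = true}) -
      cE P (Y2 false) ({ω | Y1 true ω = false} ∩ {ω | G ω = true}) =
    cE P (Y2 true) {ω | G ω = true} - cE P (Y2 false) {ω | G ω = true} :=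
  ATETS_eq_LTATE_of_no_state_dependence_general P G Y1 Y2 hG hY1 hY2 hpos hNSD
end

section
/- (Pointwise worst-case testable implication of external validity.) In the discrete data-combination setup, assume experimental internal validity, short-term external validity, consistency and strict overlap, with 𝒴 ⊆ ℝ. Then for every t ∈ ℝ and every x ∈ 𝒳 with P(X=x, G=0) > 0, P(X=x, G=1) > 0, P(W=1, X=x, G=1) > 0 and P(W=1, X=x, G=0) > 0: P(Y1 ≤ t | W=1, X=x, G=1) · P(W=1 | X=x, G=1) ≤ P(Y1 ≤ t | W=1, X=x, G=0) ≤ P(Y1 ≤ t | W=1, X=x, G=1) · P(W=1 | X=x, G=1) + P(W=0 | X=x, G=1). -/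
open MeasureTheory ProbabilityTheory

/-!
Internal validity makes `W` independent of the potential outcomes within the experimental
stratum `{X = x, G = 0}`, so conditioning further on `W = 1` does not change the law of
`Y1(1)`; external validity makes `G` independent of them within `{X = x}`, so this law is
the same in both arms. On `{W = 1}` consistency identifies `Y1` with `Y1(1)`, and in the
observational arm `P(Y1(1) ≤ t)` is the identified treated part
`P(Y1 ≤ t | W = 1) P(W = 1)` plus an untreated part lying between `0` and `P(W = 0)`.
-/

section

variable {Ω α β : Type*} [MeasurableSpace Ω] [MeasurableSpace α] [MeasurableSpace β]
  {μ : Measure Ω} {r s t u : Set Ω}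

lemma cond_congr_of_inter_eq (hs : MeasurableSet s) (h : s ∩ t = s ∩ u) :
    μ[t | s] = μ[u | s] := by
  rw [← cond_inter_self hs t, h, cond_inter_self hs u]

variable [IsFiniteMeasure μ]

lemma ProbabilityTheory.IndepFun.cond_preimage_apply {f : Ω → α} {g : Ω → β}
    (hfg : IndepFun f g μ) (hf : Measurable f) {A : Set α} {B : Set β} (hA : MeasurableSet A)
    (hB : MeasurableSet B) (hμA : μ (f ⁻¹' A) ≠ 0) :
    μ[g ⁻¹' B | f ⁻¹' A] = μ (g ⁻¹' B) := by
  rw [cond_apply (hf hA), hfg.measure_inter_preimage_eq_mul A B hA hB, ← mul_assoc,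
    ENNReal.inv_mul_cancel hμA (measure_ne_top μ _), one_mul]

lemma ProbabilityTheory.IndepFun.cond_inter_preimage_apply {f : Ω → α} {g : Ω → β}
    (hs : MeasurableSet s) (hfg : IndepFun f g μ[|s]) (hf : Measurable f) {A : Set α}
    {B : Set β} (hA : MeasurableSet A) (hB : MeasurableSet B) (hμA : μ (s ∩ f ⁻¹' A) ≠ 0) :
    μ[g ⁻¹' B | s ∩ f ⁻¹' A] = μ[g ⁻¹' B | s] := by
  rw [← cond_cond_eq_cond_inter hs (hf hA)]
  exact hfg.cond_preimage_apply hf hA hB (cond_pos_of_inter_ne_zero hs hμA).ne'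

lemma cond_real_mul_eq_inter (hs : MeasurableSet s) (t : Set Ω) :
    (μ[|s]).real t * μ.real s = μ.real (s ∩ t) := by
  rw [measureReal_def, measureReal_def, ← ENNReal.toReal_mul, cond_mul_eq_inter hs,
    measureReal_def]

lemma measureReal_le_inter_add_compl (hs : MeasurableSet s) (t : Set Ω) :
    μ.real t ≤ μ.real (s ∩ t) + μ.real sᶜ := by
  rw [← measureReal_inter_add_sdiff (s := t) hs, Set.inter_comm]
  exact add_le_add_right (measureReal_mono (Set.sdiff_subset_compl t s)) _

lemma cond_real_inter_mul_le_and_le_add_compl (hs : MeasurableSet s) (hr : MeasurableSet r)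
    (t : Set Ω) :
    (μ[|s ∩ r]).real t * (μ[|s]).real r ≤ (μ[|s]).real t ∧
      (μ[|s]).real t ≤ (μ[|s ∩ r]).real t * (μ[|s]).real r + (μ[|s]).real rᶜ := by
  rw [← cond_cond_eq_cond_inter hs hr, cond_real_mul_eq_inter hr]
  exact ⟨measureReal_mono Set.inter_subset_right, measureReal_le_inter_add_compl hr t⟩

end

theorem external_validity_worst_case_bounds_general
    {Ω : Type*} [MeasurableSpace Ω] (P : Measure Ω) [IsProbabilityMeasure P]
    {𝒳 : Type*} [MeasurableSpace 𝒳] [MeasurableSingletonClass 𝒳]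
    (W G : Ω → Bool) (X : Ω → 𝒳) (Y1 : Bool → Ω → ℝ)
    (hW : Measurable W) (hG : Measurable G) (hX : Measurable X)
    -- experimental internal validity
    (hIV : ∀ x : 𝒳, 0 < P ({ω | X ω = x} ∩ {ω | G ω = false}) →
      IndepFun W (fun ω => (Y1 true ω, Y1 false ω))
        (P[|{ω | X ω = x} ∩ {ω | G ω = false}]))
    -- short-term external validity
    (hEV : ∀ x : 𝒳, 0 < P {ω | X ω = x} →
      IndepFun G (fun ω => (Y1 true ω, Y1 false ω)) (P[|{ω | X ω = x}])) :
    ∀ (t : ℝ) (x : 𝒳),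
      0 < P ({ω | X ω = x} ∩ {ω | G ω = false}) →
      0 < P ({ω | X ω = x} ∩ {ω | G ω = true}) →
      0 < P ({ω | W ω = true} ∩ {ω | X ω = x} ∩ {ω | G ω = true}) →
      0 < P ({ω | W ω = true} ∩ {ω | X ω = x} ∩ {ω | G ω = false}) →
      cP P {ω | Y1 (W ω) ω ≤ t}
          ({ω | W ω = true} ∩ {ω | X ω = x} ∩ {ω | G ω = true}) *
        cP P {ω | W ω = true} ({ω | X ω = x} ∩ {ω | G ω = true})
      ≤ cP P {ω | Y1 (W ω) ω ≤ t}
          ({ω | W ω = true} ∩ {ω | X ω = x} ∩ {ω | G ω = false})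
      ∧
      cP P {ω | Y1 (W ω) ω ≤ t}
          ({ω | W ω = true} ∩ {ω | X ω = x} ∩ {ω | G ω = false})
      ≤ cP P {ω | Y1 (W ω) ω ≤ t}
          ({ω | W ω = true} ∩ {ω | X ω = x} ∩ {ω | G ω = true}) *
          cP P {ω | W ω = true} ({ω | X ω = x} ∩ {ω | G ω = true}) +
        cP P {ω | W ω = false} ({ω | X ω = x} ∩ {ω | G ω = true}) := by
  intro t x hX0 hX1 _ hWX0
  set Y : Ω → ℝ × ℝ := fun ω => (Y1 true ω, Y1 false ω)
  set C : Set (ℝ × ℝ) := {p | p.1 ≤ t}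
  have hC : MeasurableSet C := measurableSet_le measurable_fst measurable_const
  have hXx : MeasurableSet {ω | X ω = x} := hX (measurableSet_singleton x)
  have hGb (b : Bool) : MeasurableSet {ω | G ω = b} := hG (measurableSet_singleton b)
  have hWt : MeasurableSet {ω | W ω = true} := hW (measurableSet_singleton true)
  have hWXG (b : Bool) : {ω | W ω = true} ∩ {ω | X ω = x} ∩ {ω | G ω = b}
      = {ω | X ω = x} ∩ {ω | G ω = b} ∩ {ω | W ω = true} := by
    rw [Set.inter_assoc, Set.inter_comm]
  have consistency (b : Bool) :
      P[{ω | Y1 (W ω) ω ≤ t} | {ω | W ω = true} ∩ {ω | X ω = x} ∩ {ω | G ω = b}]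
        = P[Y ⁻¹' C | {ω | W ω = true} ∩ {ω | X ω = x} ∩ {ω | G ω = b}] := by
    refine cond_congr_of_inter_eq ((hWt.inter hXx).inter (hGb b)) ?_
    ext ω
    simp +contextual [Y, C]
  have internal_validity :
      P[Y ⁻¹' C | {ω | W ω = true} ∩ {ω | X ω = x} ∩ {ω | G ω = false}]
        = P[Y ⁻¹' C | {ω | X ω = x} ∩ {ω | G ω = false}] := by
    rw [hWXG]
    exact (hIV x hX0).cond_inter_preimage_apply (A := {true}) (hXx.inter (hGb false)) hW
      (measurableSet_singleton true) hC (hWXG false ▸ hWX0).ne'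
  have hPXx : 0 < P {ω | X ω = x} := hX0.trans_le (measure_mono Set.inter_subset_left)
  have external_validity (b : Bool) (hb : 0 < P ({ω | X ω = x} ∩ {ω | G ω = b})) :
      P[Y ⁻¹' C | {ω | X ω = x} ∩ {ω | G ω = b}] = P[Y ⁻¹' C | {ω | X ω = x}] :=
    (hEV x hPXx).cond_inter_preimage_apply (A := {b}) hXx hG (measurableSet_singleton b) hC
      hb.ne'
  have hcompl : {ω | W ω = true}ᶜ = {ω | W ω = false} := by ext; simp
  unfold cP
  rw [consistency, consistency, internal_validity, external_validity false hX0,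
    ← external_validity true hX1, hWXG, ← hcompl]
  exact cond_real_inter_mul_le_and_le_add_compl (hXx.inter (hGb true)) hWt _

/-- Pointwise worst-case testable implication of external validity: in the
discrete data-combination setup, under experimental internal validity, short-term external
validity, consistency and strict overlap, the observed experimental treated-arm distribution
function of the short-term outcome is bracketed by the Manski-type worst-case bounds built
from the observational arm. -/
theorem external_validity_worst_case_bounds
    {Ω : Type*} [MeasurableSpace Ω] (P : Measure Ω) [IsProbabilityMeasure P]
    {𝒳 : Type*} [Fintype 𝒳] [MeasurableSpace 𝒳] [MeasurableSingletonClass 𝒳]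
    (W G : Ω → Bool) (X : Ω → 𝒳) (Y1 : Bool → Ω → ℝ)
    (hW : Measurable W) (hG : Measurable G) (hX : Measurable X)
    (hY1 : ∀ w, Measurable (Y1 w))
    (hfin : ∀ w, (Set.range (Y1 w)).Finite)
    -- experimental internal validity
    (hIV : ∀ x : 𝒳, 0 < P ({ω | X ω = x} ∩ {ω | G ω = false}) →
      IndepFun W (fun ω => (Y1 true ω, Y1 false ω))
        (P[|{ω | X ω = x} ∩ {ω | G ω = false}]))
    -- short-term external validity
    (hEV : ∀ x : 𝒳, 0 < P {ω | X ω = x} →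
      IndepFun G (fun ω => (Y1 true ω, Y1 false ω)) (P[|{ω | X ω = x}])) :
    ∀ (t : ℝ) (x : 𝒳),
      0 < P ({ω | X ω = x} ∩ {ω | G ω = false}) →
      0 < P ({ω | X ω = x} ∩ {ω | G ω = true}) →
      0 < P ({ω | W ω = true} ∩ {ω | X ω = x} ∩ {ω | G ω = true}) →
      0 < P ({ω | W ω = true} ∩ {ω | X ω = x} ∩ {ω | G ω = false}) →
      cP P {ω | Y1 (W ω) ω ≤ t}
          ({ω | W ω = true} ∩ {ω | X ω = x} ∩ {ω | G ω = true}) *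
        cP P {ω | W ω = true} ({ω | X ω = x} ∩ {ω | G ω = true})
      ≤ cP P {ω | Y1 (W ω) ω ≤ t}
          ({ω | W ω = true} ∩ {ω | X ω = x} ∩ {ω | G ω = false})
      ∧
      cP P {ω | Y1 (W ω) ω ≤ t}
          ({ω | W ω = true} ∩ {ω | X ω = x} ∩ {ω | G ω = false})
      ≤ cP P {ω | Y1 (W ω) ω ≤ t}
          ({ω | W ω = true} ∩ {ω | X ω = x} ∩ {ω | G ω = true}) *
          cP P {ω | W ω = true} ({ω | X ω = x} ∩ {ω | G ω = true}) +
        cP P {ω | W ω = false} ({ω | X ω = x} ∩ {ω | G ω = true}) :=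
  external_validity_worst_case_bounds_general P W G X Y1 hW hG hX hIV hEV
end

section
/- (Symmetry identity for the Stein remainder of an exchangeable pair.) Let (X, X') be an exchangeable pair of random vectors in ℝ^p, let U be uniformly distributed on [0,1] and independent of (X, X'), set D := X' − X, and let g : ℝ^p → ℝ be a bounded measurable function. Then for all indices j, k, l ∈ {1, …, p} with E[|Dj Dk Dl|] < ∞: E[ Dj Dk Dl · U · g( X + (1−U) D ) ] = − E[ Dj Dk Dl · U · g( X + U D ) ]. -/
open MeasureTheory ProbabilityTheory

/-!
Independence of `U` from the exchangeable pair makes the joint law of `(U, X, X')` invariant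
under swapping `X` and `X'`. The swap turns `X + (1 - U) D` into `X' + (1 - U) (-D) = X + U D`
and flips the sign of the cubic `Dⱼ Dₖ Dₗ`, which gives the identity.
-/

lemma identDistrib_prodMk_swap_of_indepFun {Ω α β : Type*} [MeasurableSpace Ω]
    [MeasurableSpace α] [MeasurableSpace β] {P : Measure Ω} [IsFiniteMeasure P]
    {U : Ω → α} {X X' : Ω → β} (hU : AEMeasurable U P) (hX : AEMeasurable X P)
    (hX' : AEMeasurable X' P)
    (hexch : P.map (fun ω => (X ω, X' ω)) = P.map (fun ω => (X' ω, X ω)))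
    (hind : U ⟂ᵢ[P] (fun ω => (X ω, X' ω))) :
    IdentDistrib (fun ω => (U ω, (X ω, X' ω))) (fun ω => (U ω, (X' ω, X ω))) P P :=
  (IdentDistrib.refl hU).prodMk ⟨hX.prodMk hX', hX'.prodMk hX, hexch⟩ hind
    (hind.comp measurable_id measurable_swap)

lemma add_one_sub_mul_sub_swap {R : Type*} [CommRing R] (u x x' : R) :
    x' + (1 - u) * (x - x') = x + u * (x' - x) := by
  ring

theorem stein_remainder_symmetry_general
    {Ω : Type*} [MeasurableSpace Ω] (P : Measure Ω) [IsProbabilityMeasure P]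
    (p : ℕ) (X X' : Ω → Fin p → ℝ) (U : Ω → ℝ)
    (hX : Measurable X) (hX' : Measurable X') (hU : Measurable U)
    -- exchangeability
    (hexch : P.map (fun ω => (X ω, X' ω)) = P.map (fun ω => (X' ω, X ω)))
    -- U independent of (X, X')
    (hUindep : IndepFun U (fun ω => (X ω, X' ω)) P)
    -- g bounded measurable
    (g : (Fin p → ℝ) → ℝ) (hg : Measurable g) :
    ∀ j k l : Fin p,
      Integrable (fun ω => |(X' ω j - X ω j) * (X' ω k - X ω k) * (X' ω l - X ω l)|) P →
      ∫ ω, (X' ω j - X ω j) * (X' ω k - X ω k) * (X' ω l - X ω l) * U ω *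
          g (fun m => X ω m + (1 - U ω) * (X' ω m - X ω m)) ∂P =
        -∫ ω, (X' ω j - X ω j) * (X' ω k - X ω k) * (X' ω l - X ω l) * U ω *
          g (fun m => X ω m + U ω * (X' ω m - X ω m)) ∂P := by
  intro j k l _
  let F : ℝ × (Fin p → ℝ) × (Fin p → ℝ) → ℝ := fun ⟨u, x, x'⟩ =>
    (x' j - x j) * (x' k - x k) * (x' l - x l) * u * g (fun m => x m + (1 - u) * (x' m - x m))
  have hF : Measurable F := by
    refine Measurable.mul (by fun_prop) (hg.comp ?_)
    fun_prop
  have hlaw := identDistrib_prodMk_swap_of_indepFun hU.aemeasurable hX.aemeasurable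
    hX'.aemeasurable hexch hUindep
  calc _ = ∫ ω, F (U ω, X ω, X' ω) ∂P := rfl
    _ = ∫ ω, F (U ω, X' ω, X ω) ∂P := (hlaw.comp hF).integral_eq
    _ = _ := by
      rw [← integral_neg]
      congr 1 with ω
      simp only [F, add_one_sub_mul_sub_swap]
      ring

/-- Symmetry identity for the Stein remainder of an exchangeable pair:
if `(X, X')` is an exchangeable pair in `ℝ^p`, `U` is uniform on `[0,1]` independent of
`(X, X')`, `D = X' − X`, and `g` is bounded measurable, then for all coordinates `j, k, l`
with `E[|Dⱼ Dₖ Dₗ|] < ∞`,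
`E[Dⱼ Dₖ Dₗ · U · g(X + (1−U)D)] = −E[Dⱼ Dₖ Dₗ · U · g(X + U D)]`. -/
theorem stein_remainder_symmetry
    {Ω : Type*} [MeasurableSpace Ω] (P : Measure Ω) [IsProbabilityMeasure P]
    (p : ℕ) (X X' : Ω → Fin p → ℝ) (U : Ω → ℝ)
    (hX : Measurable X) (hX' : Measurable X') (hU : Measurable U)
    -- exchangeability
    (hexch : P.map (fun ω => (X ω, X' ω)) = P.map (fun ω => (X' ω, X ω)))
    -- U is uniform on [0,1]
    (hunif : P.map U = MeasureTheory.volume.restrict (Set.Icc (0 : ℝ) 1))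
    -- U independent of (X, X')
    (hUindep : IndepFun U (fun ω => (X ω, X' ω)) P)
    -- g bounded measurable
    (g : (Fin p → ℝ) → ℝ) (hg : Measurable g) (hgbdd : ∃ M : ℝ, ∀ v, |g v| ≤ M) :
    ∀ j k l : Fin p,
      Integrable (fun ω => |(X' ω j - X ω j) * (X' ω k - X ω k) * (X' ω l - X ω l)|) P →
      ∫ ω, (X' ω j - X ω j) * (X' ω k - X ω k) * (X' ω l - X ω l) * U ω *
          g (fun m => X ω m + (1 - U ω) * (X' ω m - X ω m)) ∂P =
        -∫ ω, (X' ω j - X ω j) * (X' ω k - X ω k) * (X' ω l - X ω l) * U ω *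
          g (fun m => X ω m + U ω * (X' ω m - X ω m)) ∂P :=
  stein_remainder_symmetry_general P p X X' U hX hX' hU hexch hUindep g hg
end

section
/- (Maximal inequality for centered fourth-moment Gram fluctuations.) There exists a universal constant C > 0 such that for every M ≥ 2 and all independent random vectors ξ1, …, ξn in ℝ^M with E[ξij⁴] < ∞ for all i, j, the matrix V := Σ_{i=1}^n ( ξi ξiᵀ − E[ξi ξiᵀ] ) satisfies E[ max_{1 ≤ j,k ≤ M} | V_{jk} | ] ≤ C √(log M) · ( E[ max_{1 ≤ j ≤ M} Σ_{i=1}^n ξij⁴ ] )^{1/2}. -/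
/-!
Symmetrize with an independent copy `ξ'` of the sample: by Jensen,
`E max |V| ≤ E max_{j,k} |∑ᵢ (ξᵢⱼξᵢₖ - ξ'ᵢⱼξ'ᵢₖ)|`. Independence allows exchanging `ξᵢ` and `ξ'ᵢ`
separately for each `i` without changing the joint law, so the right side equals its average over
Rademacher signs `εᵢ`. For fixed data the signed sums have sub-Gaussian exponential moments with
variance proxy `maxₜ ∑ᵢ aᵢₜ²`, and the exponential-moment bound for the maximum of `M²` of them
gives the factor `√(2 log (2M²))`. Minkowski's inequality separates the two copies,
`∑ᵢ ξᵢⱼ²ξᵢₖ² ≤ maxⱼ ∑ᵢ ξᵢⱼ⁴` by AM-GM, and Jensen for the square root finishes.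
-/

open MeasureTheory ProbabilityTheory Finset

def rademacherSign (b : Bool) : ℝ := if b then 1 else -1

lemma sum_exp_sum_rademacherSign_mul {ι : Type*} [Fintype ι] [DecidableEq ι] (c : ι → ℝ) :
    ∑ ε : ι → Bool, Real.exp (∑ i, rademacherSign (ε i) * c i) =
      ∏ i, (Real.exp (c i) + Real.exp (-c i)) := by
  simp_rw [Real.exp_sum]
  rw [← Fintype.piFinset_univ (β := fun _ : ι => Bool),
    ← prod_univ_sum (fun _ => univ) fun i b => Real.exp (rademacherSign b * c i)]
  refine prod_congr rfl fun i _ => ?_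
  simp [rademacherSign]

lemma sum_exp_sum_rademacherSign_mul_le {ι : Type*} [Fintype ι] [DecidableEq ι] (c : ι → ℝ) :
    ∑ ε : ι → Bool, Real.exp (∑ i, rademacherSign (ε i) * c i) ≤
      2 ^ Fintype.card ι * Real.exp (∑ i, c i ^ 2 / 2) := by
  have hcosh (x : ℝ) : Real.exp x + Real.exp (-x) ≤ 2 * Real.exp (x ^ 2 / 2) := by
    linarith [Real.cosh_eq x ▸ Real.cosh_le_exp_half_sq x]
  rw [sum_exp_sum_rademacherSign_mul, Real.exp_sum, ← card_univ, ← prod_const, ← prod_mul_distrib]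
  exact prod_le_prod (fun i _ => by positivity) fun i _ => by simpa using hcosh (c i)

lemma exp_mul_iSup_abs_le_sum {τ : Type*} [Fintype τ] [Nonempty τ] (z : τ → ℝ) (c : ℝ) :
    Real.exp (c * ⨆ t, |z t|) ≤ ∑ t, (Real.exp (c * z t) + Real.exp (-c * z t)) := by
  obtain ⟨t₀, ht₀⟩ := exists_eq_ciSup_of_finite (f := fun t => |z t|)
  rw [← ht₀]
  have hpair : Real.exp (c * |z t₀|) ≤ Real.exp (c * z t₀) + Real.exp (-c * z t₀) := by
    rcases abs_cases (z t₀) with ⟨h, -⟩ | ⟨h, -⟩ <;> rw [h]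
    · linarith [Real.exp_pos (-c * z t₀)]
    · rw [mul_neg, ← neg_mul]; linarith [Real.exp_pos (c * z t₀)]
  exact hpair.trans (single_le_sum (f := fun t => Real.exp (c * z t) + Real.exp (-c * z t))
    (fun t _ => by positivity) (mem_univ t₀))

lemma exp_sum_div_card_le {κ : Type*} [Fintype κ] [Nonempty κ] (f : κ → ℝ) :
    Real.exp ((∑ k, f k) / Fintype.card κ) ≤ (∑ k, Real.exp (f k)) / Fintype.card κ := by
  have hcard : (0 : ℝ) < Fintype.card κ := by exact_mod_cast Fintype.card_pos
  have h := convexOn_exp.map_sum_le (t := univ) (w := fun _ => (Fintype.card κ : ℝ)⁻¹) (p := f)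
    (fun _ _ => by positivity) (by simp [hcard.ne']) (fun _ _ => Set.mem_univ _)
  simpa [smul_eq_mul, div_eq_inv_mul, mul_sum] using h

lemma le_sqrt_mul_sqrt_of_forall_le_div_add {A L S : ℝ} (hL : 0 < L) (hS : 0 ≤ S)
    (h : ∀ c > 0, A ≤ L / c + c * S / 2) : A ≤ √(2 * L) * √S := by
  rcases hS.eq_or_lt with rfl | hS
  · rw [Real.sqrt_zero, mul_zero]
    refine le_of_forall_pos_le_add fun e he => ?_
    simpa [div_div_eq_mul_div, hL.ne'] using h (L / e) (by positivity)
  · have h2L : 0 < √(2 * L) := Real.sqrt_pos.2 (by positivity)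
    have hσ : 0 < √S := Real.sqrt_pos.2 hS
    convert h (√(2 * L) / √S) (by positivity) using 1
    field_simp
    rw [Real.sq_sqrt hS.le, Real.sq_sqrt (by positivity)]
    ring

lemma sum_iSup_abs_div_card_le_of_sum_exp_le {κ τ : Type*} [Fintype κ] [Nonempty κ] [Fintype τ]
    [Nonempty τ] (Z : κ → τ → ℝ) {S : ℝ} (hS : 0 ≤ S)
    (h : ∀ t c, ∑ k, Real.exp (c * Z k t) ≤ Fintype.card κ * Real.exp (c ^ 2 * S / 2)) :
    (∑ k, ⨆ t, |Z k t|) / Fintype.card κ ≤ √(2 * Real.log (2 * Fintype.card τ)) * √S := by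
  have hκ : (0 : ℝ) < Fintype.card κ := by exact_mod_cast Fintype.card_pos
  have hτ : (1 : ℝ) ≤ Fintype.card τ := by exact_mod_cast Fintype.card_pos
  refine le_sqrt_mul_sqrt_of_forall_le_div_add (Real.log_pos (by linarith)) hS fun c hc => ?_
  set A := (∑ k, ⨆ t, |Z k t|) / Fintype.card κ
  have hexp : Real.exp (c * A) ≤ 2 * Fintype.card τ * Real.exp (c ^ 2 * S / 2) := calc
    Real.exp (c * A) = Real.exp ((∑ k, c * ⨆ t, |Z k t|) / Fintype.card κ) := by
      rw [← mul_sum, mul_div_assoc]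
    _ ≤ (∑ k, Real.exp (c * ⨆ t, |Z k t|)) / Fintype.card κ := exp_sum_div_card_le _
    _ ≤ (∑ k, ∑ t, (Real.exp (c * Z k t) + Real.exp (-c * Z k t))) / Fintype.card κ := by
      gcongr with k; exact exp_mul_iSup_abs_le_sum _ c
    _ = (∑ t, (∑ k, Real.exp (c * Z k t) + ∑ k, Real.exp (-c * Z k t))) / Fintype.card κ := by
      rw [sum_comm]; simp_rw [sum_add_distrib]
    _ ≤ (∑ _t : τ, (Fintype.card κ * Real.exp (c ^ 2 * S / 2)
          + Fintype.card κ * Real.exp ((-c) ^ 2 * S / 2))) / Fintype.card κ := by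
      gcongr with t <;> exact h t _
    _ = 2 * Fintype.card τ * Real.exp (c ^ 2 * S / 2) := by
      simp only [neg_sq, sum_const, card_univ, nsmul_eq_mul]
      field_simp
      ring
  have hlog : c * A ≤ Real.log (2 * Fintype.card τ) + c ^ 2 * S / 2 := by
    simpa [Real.log_mul, Real.log_exp, (show (0 : ℝ) < 2 * Fintype.card τ by positivity).ne']
      using Real.log_le_log (Real.exp_pos _) hexp
  rw [show Real.log (2 * Fintype.card τ) / c + c * S / 2
      = (Real.log (2 * Fintype.card τ) + c ^ 2 * S / 2) / c by field_simp, le_div_iff₀ hc]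
  linarith

lemma sum_iSup_abs_sum_rademacherSign_mul_div_le {ι τ : Type*} [Fintype ι] [DecidableEq ι]
    [Fintype τ] [Nonempty τ] (a : ι → τ → ℝ) :
    (∑ ε : ι → Bool, ⨆ t, |∑ i, rademacherSign (ε i) * a i t|) / 2 ^ Fintype.card ι ≤
      √(2 * Real.log (2 * Fintype.card τ)) * √(⨆ t, ∑ i, a i t ^ 2) := by
  have hcard : ((Fintype.card (ι → Bool) : ℕ) : ℝ) = 2 ^ Fintype.card ι := by simp
  rw [← hcard]
  refine sum_iSup_abs_div_card_le_of_sum_exp_le (κ := ι → Bool) _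
    (Real.iSup_nonneg fun t : τ => by positivity) fun t c => ?_
  calc ∑ ε : ι → Bool, Real.exp (c * ∑ i, rademacherSign (ε i) * a i t)
      = ∑ ε : ι → Bool, Real.exp (∑ i, rademacherSign (ε i) * (c * a i t)) := by
        simp only [mul_sum, mul_left_comm]
    _ ≤ 2 ^ Fintype.card ι * Real.exp (∑ i, (c * a i t) ^ 2 / 2) :=
        sum_exp_sum_rademacherSign_mul_le _
    _ ≤ _ := by
        rw [hcard]
        gcongr
        simp_rw [mul_pow, ← sum_div, ← mul_sum]
        gcongr
        exact le_ciSup (f := fun t => ∑ i, a i t ^ 2) (Set.finite_range _).bddAbove t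

lemma sqrt_sum_sub_sq_le {ι : Type*} [Fintype ι] (x y : ι → ℝ) :
    √(∑ i, (x i - y i) ^ 2) ≤ √(∑ i, x i ^ 2) + √(∑ i, y i ^ 2) := by
  simpa [EuclideanSpace.norm_eq] using
    norm_sub_le (WithLp.toLp 2 x : EuclideanSpace ℝ ι) (WithLp.toLp 2 y)

lemma sqrt_iSup_sum_sub_sq_le {ι τ : Type*} [Fintype ι] [Finite τ] (a b : ι → τ → ℝ) :
    √(⨆ t, ∑ i, (a i t - b i t) ^ 2) ≤ √(⨆ t, ∑ i, a i t ^ 2) + √(⨆ t, ∑ i, b i t ^ 2) := by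
  refine Real.sqrt_le_iff.2 ⟨by positivity, Real.iSup_le (fun t => ?_) (by positivity)⟩
  calc ∑ i, (a i t - b i t) ^ 2 ≤ (√(∑ i, a i t ^ 2) + √(∑ i, b i t ^ 2)) ^ 2 :=
        (Real.sqrt_le_left (by positivity)).1 (sqrt_sum_sub_sq_le _ _)
    _ ≤ _ := by
        gcongr
        · exact le_ciSup (f := fun t => ∑ i, a i t ^ 2) (Set.finite_range _).bddAbove t
        · exact le_ciSup (f := fun t => ∑ i, b i t ^ 2) (Set.finite_range _).bddAbove t

lemma abs_le_sqrt_iSup_sum_sq {ι τ : Type*} [Fintype ι] [Finite τ] (a : ι → τ → ℝ) (i : ι)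
    (t : τ) : |a i t| ≤ √(⨆ t, ∑ i, a i t ^ 2) :=
  Real.abs_le_sqrt <| (single_le_sum (fun j _ => sq_nonneg (a j t)) (mem_univ i)).trans <|
    le_ciSup (f := fun t => ∑ i, a i t ^ 2) (Set.finite_range _).bddAbove t

lemma abs_iSup_le_sum_abs {τ : Type*} [Fintype τ] [Nonempty τ] (g : τ → ℝ) :
    |⨆ t, g t| ≤ ∑ t, |g t| := by
  obtain ⟨t₀, ht₀⟩ := exists_eq_ciSup_of_finite (f := g)
  rw [← ht₀]
  exact single_le_sum (f := fun t => |g t|) (fun t _ => abs_nonneg _) (mem_univ t₀)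

def swapIf {ι E : Type*} (ε : ι → Bool) (x : ι → E × E) : ι → E × E :=
  fun i => if ε i then x i else (x i).swap

lemma swapIf_fst_sub_snd {ι τ : Type*} (ε : ι → Bool) (x : ι → (τ → ℝ) × (τ → ℝ)) (i : ι)
    (t : τ) :
    (swapIf ε x i).1 t - (swapIf ε x i).2 t = rademacherSign (ε i) * ((x i).1 t - (x i).2 t) := by
  unfold swapIf rademacherSign
  cases ε i <;> simp

lemma measurePreserving_swapIf {ι E : Type*} [Fintype ι] [MeasurableSpace E] (μ : ι → Measure E)
    [∀ i, SigmaFinite (μ i)] (ε : ι → Bool) :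
    MeasurePreserving (swapIf ε) (Measure.pi fun i => (μ i).prod (μ i))
      (Measure.pi fun i => (μ i).prod (μ i)) := by
  have hfactor : (swapIf ε : (ι → E × E) → ι → E × E) =
      fun x i => (if ε i then id else Prod.swap) (x i) := by
    ext1 x; ext1 i; unfold swapIf; split_ifs <;> rfl
  rw [hfactor]
  refine measurePreserving_pi _ _ fun i => ?_
  split_ifs
  · exact MeasurePreserving.id _
  · exact Measure.measurePreserving_swap

section Integrals

variable {α : Type*} [MeasurableSpace α] {μ : Measure α}

lemma integrable_iSup_of_finite {τ : Type*} [Fintype τ] [Nonempty τ] {f : τ → α → ℝ}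
    (hf : ∀ t, Integrable (f t) μ) :
    Integrable (fun x => ⨆ t, f t x) μ :=
  (integrable_finsetSum univ fun t _ => (hf t).abs).mono'
    (AEMeasurable.iSup fun t => (hf t).aemeasurable).aestronglyMeasurable
    (ae_of_all _ fun x => by simpa using abs_iSup_le_sum_abs fun t => f t x)

lemma MeasureTheory.Integrable.sqrt [IsFiniteMeasure μ] {f : α → ℝ} (hf : Integrable f μ) :
    Integrable (fun x => √(f x)) μ :=
  ((integrable_const 1).add hf.abs).mono'
    (Real.continuous_sqrt.comp_aestronglyMeasurable hf.aestronglyMeasurable)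
    (ae_of_all _ fun x => by
      rw [Real.norm_eq_abs, abs_of_nonneg (Real.sqrt_nonneg _), Pi.add_apply]
      nlinarith [Real.sq_sqrt (abs_nonneg (f x)), Real.sqrt_nonneg |f x|,
        Real.sqrt_le_sqrt (le_abs_self (f x))])

lemma integral_sqrt_le_sqrt_integral [IsProbabilityMeasure μ] {f : α → ℝ} (hf : Integrable f μ)
    (hf0 : ∀ᵐ x ∂μ, 0 ≤ f x) :
    ∫ x, √(f x) ∂μ ≤ √(∫ x, f x ∂μ) :=
  Real.strictConcaveOn_sqrt.concaveOn.le_map_integral Real.continuous_sqrt.continuousOn isClosed_Ici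
    hf0 hf hf.sqrt

end Integrals

section Symmetrization

variable {Ω : Type*} [MeasurableSpace Ω] {P : Measure Ω} [IsProbabilityMeasure P]

lemma integral_iSup_abs_sub_integral_le {τ : Type*} [Fintype τ] [Nonempty τ] {Z : Ω → τ → ℝ}
    (hZ : ∀ t, Integrable (fun ω => Z ω t) P) :
    ∫ ω, ⨆ t, |Z ω t - ∫ ω', Z ω' t ∂P| ∂P ≤ ∫ p, ⨆ t, |Z p.1 t - Z p.2 t| ∂P.prod P := by
  have hD : Integrable (fun p : Ω × Ω => ⨆ t, |Z p.1 t - Z p.2 t|) (P.prod P) :=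
    integrable_iSup_of_finite fun t => (((hZ t).comp_fst P).sub ((hZ t).comp_snd P)).abs
  have hsection (ω : Ω) (t : τ) : Integrable (fun ω' => |Z ω t - Z ω' t|) P :=
    ((integrable_const _).sub (hZ t)).abs
  calc ∫ ω, ⨆ t, |Z ω t - ∫ ω', Z ω' t ∂P| ∂P
      ≤ ∫ ω, ∫ ω', ⨆ t, |Z ω t - Z ω' t| ∂P ∂P := by
        refine integral_mono_of_nonneg (ae_of_all _ fun ω => Real.iSup_nonneg fun t => abs_nonneg _)
          hD.integral_prod_left (ae_of_all _ fun ω => ciSup_le fun t => ?_)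
        calc |Z ω t - ∫ ω', Z ω' t ∂P| = |∫ ω', (Z ω t - Z ω' t) ∂P| := by
              rw [integral_sub (integrable_const _) (hZ t), integral_const, probReal_univ, one_smul]
          _ ≤ ∫ ω', |Z ω t - Z ω' t| ∂P := abs_integral_le_integral_abs
          _ ≤ ∫ ω', ⨆ t, |Z ω t - Z ω' t| ∂P :=
              integral_mono (hsection ω t) (integrable_iSup_of_finite (hsection ω)) fun ω' =>
                le_ciSup (f := fun t => |Z ω t - Z ω' t|) (Set.finite_range _).bddAbove t
    _ = ∫ p, ⨆ t, |Z p.1 t - Z p.2 t| ∂P.prod P := integral_integral hD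

namespace ProbabilityTheory

lemma iIndepFun.map_prod_eq_pi_prod {ι E : Type*} [Fintype ι] [MeasurableSpace E]
    {X : ι → Ω → E} (hX : ∀ i, Measurable (X i)) (hind : iIndepFun X P) :
    (P.prod P).map (fun p i => (X i p.1, X i p.2)) =
      Measure.pi fun i => (P.map (X i)).prod (P.map (X i)) := by
  have : ∀ i, IsProbabilityMeasure (P.map (X i)) :=
    fun i => Measure.isProbabilityMeasure_map (hX i).aemeasurable
  have hJ : Measurable fun ω i => X i ω := measurable_pi_lambda _ hX
  have hlaw := hind.map_fun_eq_pi_map fun i => (hX i).aemeasurable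
  have hsplit : (fun p : Ω × Ω => fun i => (X i p.1, X i p.2)) =
      (MeasurableEquiv.arrowProdEquivProdArrow E E ι).symm ∘
        Prod.map (fun ω i => X i ω) (fun ω i => X i ω) := rfl
  rw [hsplit, ← Measure.map_map (MeasurableEquiv.measurable _) (hJ.prodMap hJ),
    ← Measure.map_prod_map _ _ hJ hJ, hlaw,
    ((measurePreserving_arrowProdEquivProdArrow E E ι _ _).symm _).map_eq]

lemma iIndepFun.integral_comp_swapIf {ι E : Type*} [Fintype ι] [MeasurableSpace E]
    {X : ι → Ω → E} (hX : ∀ i, Measurable (X i)) (hind : iIndepFun X P) (ε : ι → Bool)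
    {h : (ι → E × E) → ℝ} (hh : Measurable h) :
    ∫ p, h (swapIf ε fun i => (X i p.1, X i p.2)) ∂P.prod P =
      ∫ p, h (fun i => (X i p.1, X i p.2)) ∂P.prod P := by
  have : ∀ i, IsProbabilityMeasure (P.map (X i)) :=
    fun i => Measure.isProbabilityMeasure_map (hX i).aemeasurable
  have hΦ : Measurable fun (p : Ω × Ω) i => (X i p.1, X i p.2) :=
    measurable_pi_lambda _ fun i => ((hX i).comp measurable_fst).prodMk ((hX i).comp measurable_snd)
  have hT := measurePreserving_swapIf (fun i => P.map (X i)) ε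
  have hlaw := hind.map_prod_eq_pi_prod hX
  calc ∫ p, h (swapIf ε fun i => (X i p.1, X i p.2)) ∂P.prod P
      = ∫ x, h (swapIf ε x) ∂Measure.pi fun i => (P.map (X i)).prod (P.map (X i)) := by
        rw [← hlaw, integral_map hΦ.aemeasurable
          (hlaw ▸ (hh.comp hT.measurable).aestronglyMeasurable)]
    _ = ∫ x, h x ∂Measure.pi fun i => (P.map (X i)).prod (P.map (X i)) := by
        conv_rhs => rw [← hT.map_eq]
        rw [integral_map hT.measurable.aemeasurable (hT.map_eq ▸ hh.aestronglyMeasurable)]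
    _ = ∫ p, h (fun i => (X i p.1, X i p.2)) ∂P.prod P := by
        rw [← hlaw, integral_map hΦ.aemeasurable (hlaw ▸ hh.aestronglyMeasurable)]

end ProbabilityTheory

theorem integral_iSup_abs_sum_sub_integral_le {ι τ : Type*} [Fintype ι] [DecidableEq ι] [Fintype τ]
    [Nonempty τ] {X : ι → Ω → τ → ℝ} (hX : ∀ i, Measurable (X i)) (hind : iIndepFun X P)
    (hR : Integrable (fun ω => √(⨆ t, ∑ i, X i ω t ^ 2)) P) :
    ∫ ω, ⨆ t, |∑ i, (X i ω t - ∫ ω', X i ω' t ∂P)| ∂P ≤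
      2 * √(2 * Real.log (2 * Fintype.card τ)) * ∫ ω, √(⨆ t, ∑ i, X i ω t ^ 2) ∂P := by
  set R := fun ω => √(⨆ t, ∑ i, X i ω t ^ 2)
  set K := √(2 * Real.log (2 * Fintype.card τ))
  have hXint (i : ι) (t : τ) : Integrable (fun ω => X i ω t) P :=
    hR.mono' ((measurable_pi_apply t).comp (hX i)).aestronglyMeasurable
      (ae_of_all _ fun ω => abs_le_sqrt_iSup_sum_sq (fun i t => X i ω t) i t)
  let D (ε : ι → Bool) (p : Ω × Ω) : ℝ :=
    ⨆ t, |∑ i, rademacherSign (ε i) * (X i p.1 t - X i p.2 t)|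
  have hD_int (ε : ι → Bool) : Integrable (D ε) (P.prod P) :=
    integrable_iSup_of_finite fun t => (integrable_finsetSum _ fun i _ =>
      (((hXint i t).comp_fst P).sub ((hXint i t).comp_snd P)).const_mul _).abs
  have hD_flip (ε : ι → Bool) : ∫ p, D ε p ∂P.prod P = ∫ p, D (fun _ => true) p ∂P.prod P := by
    have hh : Measurable fun x : ι → (τ → ℝ) × (τ → ℝ) => ⨆ t, |∑ i, ((x i).1 t - (x i).2 t)| :=
      Measurable.iSup fun t => by fun_prop
    simpa [D, swapIf_fst_sub_snd, rademacherSign] using hind.integral_comp_swapIf hX ε hh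
  have hD_avg (p : Ω × Ω) : (∑ ε, D ε p) / 2 ^ Fintype.card ι ≤ K * (R p.1 + R p.2) :=
    (sum_iSup_abs_sum_rademacherSign_mul_div_le _).trans <| mul_le_mul_of_nonneg_left
      (sqrt_iSup_sum_sub_sq_le (fun i t => X i p.1 t) (fun i t => X i p.2 t)) (by positivity)
  calc ∫ ω, ⨆ t, |∑ i, (X i ω t - ∫ ω', X i ω' t ∂P)| ∂P
      = ∫ ω, ⨆ t, |∑ i, X i ω t - ∫ ω', ∑ i, X i ω' t ∂P| ∂P := by
        simp_rw [integral_finsetSum _ fun i _ => hXint i _, sum_sub_distrib]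
    _ ≤ ∫ p, D (fun _ => true) p ∂P.prod P := by
        simpa [D, rademacherSign, sum_sub_distrib] using
          integral_iSup_abs_sub_integral_le (fun t => integrable_finsetSum _ fun i _ => hXint i t)
    _ = ∫ p, (∑ ε, D ε p) / 2 ^ Fintype.card ι ∂P.prod P := by
        rw [integral_div, integral_finsetSum _ fun ε _ => hD_int ε]
        simp [hD_flip]
    _ ≤ ∫ p, K * (R p.1 + R p.2) ∂P.prod P :=
        integral_mono_of_nonneg (ae_of_all _ fun p => div_nonneg (sum_nonneg fun ε _ =>
            Real.iSup_nonneg fun t => abs_nonneg _) (by positivity))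
          (((hR.comp_fst P).add (hR.comp_snd P)).const_mul K) (ae_of_all _ hD_avg)
    _ = 2 * K * ∫ ω, R ω ∂P := by
        rw [integral_const_mul, integral_add (hR.comp_fst P) (hR.comp_snd P), integral_fun_fst,
          integral_fun_snd]
        simp; ring

end Symmetrization

lemma sum_sq_mul_sq_le_iSup_sum_pow_four {ι τ : Type*} [Fintype ι] [Finite τ] (x : ι → τ → ℝ)
    (j k : τ) : ∑ i, (x i j * x i k) ^ 2 ≤ ⨆ j, ∑ i, x i j ^ 4 := by
  have hbdd : BddAbove (Set.range fun j => ∑ i, x i j ^ 4) := (Set.finite_range _).bddAbove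
  calc ∑ i, (x i j * x i k) ^ 2 ≤ ∑ i, (x i j ^ 4 + x i k ^ 4) / 2 :=
        sum_le_sum fun i _ => by nlinarith [sq_nonneg (x i j ^ 2 - x i k ^ 2)]
    _ = ((∑ i, x i j ^ 4) + ∑ i, x i k ^ 4) / 2 := by rw [← sum_div, sum_add_distrib]
    _ ≤ ((⨆ j, ∑ i, x i j ^ 4) + ⨆ j, ∑ i, x i j ^ 4) / 2 := by
        gcongr <;> exact le_ciSup hbdd _
    _ = ⨆ j, ∑ i, x i j ^ 4 := by ring

lemma sqrt_iSup_sum_sq_mul_sq_le {ι τ : Type*} [Fintype ι] [Finite τ] (x : ι → τ → ℝ) :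
    √(⨆ t : τ × τ, ∑ i, (x i t.1 * x i t.2) ^ 2) ≤ √(⨆ j, ∑ i, x i j ^ 4) :=
  Real.sqrt_le_sqrt <| Real.iSup_le (fun t => sum_sq_mul_sq_le_iSup_sum_pow_four x t.1 t.2) <|
    Real.iSup_nonneg fun j => by positivity

section FourthMoments

variable {Ω ι τ : Type*} [MeasurableSpace Ω] {P : Measure Ω} [Fintype ι] [Fintype τ] [Nonempty τ]
  {ξ : ι → Ω → τ → ℝ}

lemma integrable_iSup_sum_pow_four (h4 : ∀ i j, Integrable (fun ω => ξ i ω j ^ 4) P) :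
    Integrable (fun ω => ⨆ j, ∑ i, ξ i ω j ^ 4) P :=
  integrable_iSup_of_finite fun j => integrable_finsetSum _ fun i _ => h4 i j

lemma integrable_sqrt_iSup_sum_sq_mul_sq [IsFiniteMeasure P] (hξ : ∀ i, Measurable (ξ i))
    (h4 : ∀ i j, Integrable (fun ω => ξ i ω j ^ 4) P) :
    Integrable (fun ω => √(⨆ t : τ × τ, ∑ i, (ξ i ω t.1 * ξ i ω t.2) ^ 2)) P :=
  (integrable_iSup_sum_pow_four h4).sqrt.mono'
    ((Measurable.iSup fun t => by fun_prop).sqrt.aestronglyMeasurable)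
    (ae_of_all _ fun ω => by
      rw [Real.norm_eq_abs, abs_of_nonneg (Real.sqrt_nonneg _)]
      exact sqrt_iSup_sum_sq_mul_sq_le fun i => ξ i ω)

lemma integral_sqrt_iSup_sum_sq_mul_sq_le [IsProbabilityMeasure P] (hξ : ∀ i, Measurable (ξ i))
    (h4 : ∀ i j, Integrable (fun ω => ξ i ω j ^ 4) P) :
    ∫ ω, √(⨆ t : τ × τ, ∑ i, (ξ i ω t.1 * ξ i ω t.2) ^ 2) ∂P ≤
      √(∫ ω, ⨆ j, ∑ i, ξ i ω j ^ 4 ∂P) :=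
  (integral_mono (integrable_sqrt_iSup_sum_sq_mul_sq hξ h4) (integrable_iSup_sum_pow_four h4).sqrt
    fun ω => sqrt_iSup_sum_sq_mul_sq_le fun i => ξ i ω).trans <|
      integral_sqrt_le_sqrt_integral (integrable_iSup_sum_pow_four h4)
        (ae_of_all _ fun ω => Real.iSup_nonneg fun j => by positivity)

end FourthMoments

lemma two_mul_sqrt_two_mul_log_two_mul_mul_self_le {x : ℝ} (hx : 2 ≤ x) :
    2 * √(2 * Real.log (2 * (x * x))) ≤ 5 * √(Real.log x) := by
  have hlog : Real.log (2 * (x * x)) ≤ 3 * Real.log x := by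
    rw [Real.log_mul (by norm_num) (by positivity), Real.log_mul (by positivity) (by positivity)]
    linarith [Real.log_le_log (by norm_num) hx]
  have hsq (c a : ℝ) (hc : 0 ≤ c) : c * √a = √(c ^ 2 * a) := by
    rw [Real.sqrt_mul (sq_nonneg c), Real.sqrt_sq hc]
  rw [hsq 2 _ (by norm_num), hsq 5 _ (by norm_num)]
  exact Real.sqrt_le_sqrt (by linarith [Real.log_nonneg (by linarith : (1 : ℝ) ≤ x)])

/-- Maximal inequality for centered fourth-moment Gram fluctuations: there
is a universal constant `C > 0` such that for every `M ≥ 2` and independent random vectors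
`ξ₁, …, ξₙ` in `ℝ^M` with finite fourth moments, the centered Gram matrix
`V = Σᵢ (ξᵢξᵢᵀ − E[ξᵢξᵢᵀ])` satisfies
`E[max_{j,k} |V_{jk}|] ≤ C √(log M) (E[max_j Σᵢ ξᵢⱼ⁴])^{1/2}`. -/
theorem gram_fluctuation_maximal_inequality :
    ∃ C : ℝ, 0 < C ∧
      ∀ (Ω : Type) (_ : MeasurableSpace Ω) (P : Measure Ω), IsProbabilityMeasure P →
      ∀ (M n : ℕ), 2 ≤ M →
      ∀ ξ : Fin n → Ω → Fin M → ℝ,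
        (∀ i, Measurable (ξ i)) →
        (∀ (i : Fin n) (j : Fin M), Integrable (fun ω => (ξ i ω j) ^ 4) P) →
        iIndepFun ξ P →
        ∫ ω, ⨆ j : Fin M, ⨆ k : Fin M,
            |∑ i : Fin n, (ξ i ω j * ξ i ω k - ∫ ω', ξ i ω' j * ξ i ω' k ∂P)| ∂P ≤
          C * Real.sqrt (Real.log M) *
            Real.sqrt (∫ ω, ⨆ j : Fin M, ∑ i : Fin n, (ξ i ω j) ^ 4 ∂P) := by
  refine ⟨5, by norm_num, fun Ω _ P _ M n hM ξ hξ h4 hind => ?_⟩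
  have : Nonempty (Fin M) := ⟨⟨0, by omega⟩⟩
  let X (i : Fin n) (ω : Ω) (t : Fin M × Fin M) : ℝ := ξ i ω t.1 * ξ i ω t.2
  have hX (i : Fin n) : Measurable (X i) := measurable_pi_lambda _ fun t => by fun_prop
  have hXind : iIndepFun X P :=
    hind.comp (fun _ (x : Fin M → ℝ) (t : Fin M × Fin M) => x t.1 * x t.2) fun _ => by fun_prop
  calc ∫ ω, ⨆ j : Fin M, ⨆ k : Fin M,
        |∑ i : Fin n, (ξ i ω j * ξ i ω k - ∫ ω', ξ i ω' j * ξ i ω' k ∂P)| ∂P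
      = ∫ ω, ⨆ t, |∑ i, (X i ω t - ∫ ω', X i ω' t ∂P)| ∂P := by
        congr 1 with ω
        exact (ciSup_prod (f := fun t => |∑ i, (X i ω t - ∫ ω', X i ω' t ∂P)|)
          (Set.finite_range _).bddAbove).symm
    _ ≤ 2 * √(2 * Real.log (2 * Fintype.card (Fin M × Fin M))) *
          ∫ ω, √(⨆ t, ∑ i, X i ω t ^ 2) ∂P :=
        integral_iSup_abs_sum_sub_integral_le hX hXind (integrable_sqrt_iSup_sum_sq_mul_sq hξ h4)
    _ ≤ 2 * √(2 * Real.log (2 * Fintype.card (Fin M × Fin M))) *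
          √(∫ ω, ⨆ j, ∑ i, ξ i ω j ^ 4 ∂P) := by
        gcongr
        exact integral_sqrt_iSup_sum_sq_mul_sq_le hξ h4
    _ ≤ 5 * √(Real.log M) * √(∫ ω, ⨆ j, ∑ i, ξ i ω j ^ 4 ∂P) := by
        refine mul_le_mul_of_nonneg_right ?_ (Real.sqrt_nonneg _)
        simpa using two_mul_sqrt_two_mul_log_two_mul_mul_self_le (x := M) (by exact_mod_cast hM)
end
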